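/- Let (R_n)_{n≥1} be a sequence of positive reals with R_n ≥ n for all n, and suppose there exist η > 0 and a (random) index n_1 such that R_{n+1} ≤ R_n + η·log R_n for all n ≥ n_1. Then for every a > 1, limsup_{n→∞} R_n / (n (log n)^a) = 0. -/
import Mathlib


open Filter

lemma tele_aux (R f : ℕ → ℝ) (N : ℕ) (h : ∀ n, N ≤ n → R (n+1) ≤ R n + f n) :
    ∀ n, N ≤ n → R n ≤ R N + ∑ k ∈ Finset.Ico N n, f k := by
  intro n hn
  induction n, hn using Nat.le_induction with
  | base => simp
  | succ n hn ih =>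
    have h1 := h n hn
    rw [Finset.sum_Ico_succ_top hn]
    linarith


/-- If `R n ≥ n` for all `n ≥ 1` and eventually `R (n+1) ≤ R n + η log (R n)` for some
`η > 0`, then for every `a > 1`, `limsup_n R n / (n (log n)^a) = 0`. -/
theorem stmt_8 (R : ℕ → ℝ) (hpos : ∀ n, 0 < R n)
    (hlow : ∀ n : ℕ, 1 ≤ n → (n : ℝ) ≤ R n)
    (η : ℝ) (hη : 0 < η) (n₁ : ℕ)
    (hstep : ∀ n : ℕ, n₁ ≤ n → R (n + 1) ≤ R n + η * Real.log (R n))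
    (a : ℝ) (ha : 1 < a) :
    Filter.limsup (fun n : ℕ => R n / (n * Real.log n ^ a)) atTop = 0 := by
  have hlogR : ∀ n, Real.log (R n) ≤ R n := fun n => Real.log_le_self (hpos n).le
  -- Step 1: exponential bound
  have step1 : ∀ n, n₁ ≤ n → R n ≤ R n₁ * (1+η)^(n - n₁) := by
    intro n hn
    induction n, hn using Nat.le_induction with
    | base => simp
    | succ n hn ih =>
      have h1 := hstep n hn
      have h2 : R (n+1) ≤ (1+η) * R n := by nlinarith [hlogR n, hpos n]
      have h3 : (1+η) * R n ≤ (1+η) * (R n₁ * (1+η)^(n-n₁)) :=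
        mul_le_mul_of_nonneg_left ih (by linarith)
      have h4 : n + 1 - n₁ = (n - n₁) + 1 := by omega
      rw [h4, pow_succ]
      calc R (n+1) ≤ (1+η) * (R n₁ * (1+η)^(n-n₁)) := le_trans h2 h3
        _ = R n₁ * ((1+η)^(n-n₁) * (1+η)) := by ring
  set A := Real.log (R n₁) with hA
  set B := Real.log (1+η) with hB
  have hB0 : 0 ≤ B := Real.log_nonneg (by linarith)
  -- Step 2: linear log bound
  have step2 : ∀ n, n₁ ≤ n → Real.log (R n) ≤ A + B * n := by
    intro n hn
    have h1 : Real.log (R n) ≤ Real.log (R n₁ * (1+η)^(n-n₁)) :=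
      Real.log_le_log (hpos n) (step1 n hn)
    rw [Real.log_mul (hpos n₁).ne' (by positivity), Real.log_pow] at h1
    have : ((n - n₁ : ℕ) : ℝ) ≤ (n : ℝ) := by exact_mod_cast Nat.sub_le n n₁
    nlinarith
  set A' := max A 0 with hA'
  have hA'0 : 0 ≤ A' := le_max_right _ _
  -- Step 3: quadratic bound
  have step3 : ∀ n, n₁ ≤ n → R n ≤ R n₁ + n * (η * (A' + B * n)) := by
    intro n hn
    have h1 := tele_aux R (fun k => η * Real.log (R k)) n₁ hstep n hn
    have h2 : ∑ k ∈ Finset.Ico n₁ n, η * Real.log (R k)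
        ≤ (Finset.Ico n₁ n).card • (η * (A' + B * n)) := by
      apply Finset.sum_le_card_nsmul
      intro k hk
      obtain ⟨hk1, hk2⟩ := Finset.mem_Ico.mp hk
      have h3 := step2 k hk1
      have h4 : (k : ℝ) ≤ (n : ℝ) := by exact_mod_cast hk2.le
      have h5 : A ≤ A' := le_max_left _ _
      have h6 : Real.log (R k) ≤ A' + B * n := by
        nlinarith [mul_le_mul_of_nonneg_left h4 hB0]
      exact mul_le_mul_of_nonneg_left h6 hη.le
    rw [Nat.card_Ico, nsmul_eq_mul] at h2
    have h6 : ((n - n₁ : ℕ) : ℝ) ≤ (n : ℝ) := by exact_mod_cast Nat.sub_le n n₁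
    have h7 : 0 ≤ η * (A' + B * n) :=
      mul_nonneg hη.le (add_nonneg hA'0 (mul_nonneg hB0 n.cast_nonneg))
    nlinarith [mul_le_mul_of_nonneg_right h6 h7]
  set C := R n₁ + η * A' + η * B with hC
  have hC0 : 0 < C := by
    have := mul_nonneg hη.le hA'0
    have := mul_nonneg hη.le hB0
    linarith [hpos n₁]
  set N' := max n₁ 1 with hN'
  have step3' : ∀ n, N' ≤ n → R n ≤ C * (n:ℝ)^2 := by
    intro n hn
    have hn1 : 1 ≤ n := le_trans (le_max_right _ _) hn
    have hn1' : (1:ℝ) ≤ (n:ℝ) := by exact_mod_cast hn1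
    have h1 := step3 n (le_trans (le_max_left _ _) hn)
    have hnn : (n:ℝ) ≤ (n:ℝ)^2 := by nlinarith
    have h1' : (1:ℝ) ≤ (n:ℝ)^2 := by nlinarith
    nlinarith [mul_le_mul_of_nonneg_left hnn (mul_nonneg hη.le hA'0), hpos n₁,
      mul_le_mul_of_nonneg_left h1' (hpos n₁).le]
  -- Step 4: logarithmic bound on log R n
  have step4 : ∀ n, N' ≤ n → Real.log (R n) ≤ Real.log C + 2 * Real.log n := by
    intro n hn
    have hn1 : 1 ≤ n := le_trans (le_max_right _ _) hn
    have hn0 : (0:ℝ) < (n:ℝ) := by exact_mod_cast hn1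
    have h1 : Real.log (R n) ≤ Real.log (C * (n:ℝ)^2) :=
      Real.log_le_log (hpos n) (step3' n hn)
    rw [Real.log_mul hC0.ne' (by positivity), Real.log_pow] at h1
    push_cast at h1
    linarith
  set L' := max (Real.log C) 0 with hL'
  have hL'0 : 0 ≤ L' := le_max_right _ _
  -- Step 5: n log n bound
  have step5 : ∀ n, N' ≤ n → R n ≤ R N' + n * (η * (L' + 2 * Real.log n)) := by
    intro n hn
    have hn1 : 1 ≤ n := le_trans (le_max_right _ _) hn
    have h1 := tele_aux R (fun k => η * Real.log (R k)) N'
      (fun k hk => hstep k (le_trans (le_max_left _ _) hk)) n hn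
    have hlogn : 0 ≤ Real.log n := Real.log_natCast_nonneg n
    have h2 : ∑ k ∈ Finset.Ico N' n, η * Real.log (R k)
        ≤ (Finset.Ico N' n).card • (η * (L' + 2 * Real.log n)) := by
      apply Finset.sum_le_card_nsmul
      intro k hk
      obtain ⟨hk1, hk2⟩ := Finset.mem_Ico.mp hk
      have h3 := step4 k hk1
      have hk0 : (0:ℝ) < (k:ℝ) := by
        have : 1 ≤ k := le_trans (le_max_right _ _) hk1
        exact_mod_cast this
      have h4 : Real.log k ≤ Real.log n :=
        Real.log_le_log hk0 (by exact_mod_cast hk2.le)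
      have h5 : Real.log C ≤ L' := le_max_left _ _
      nlinarith
    rw [Nat.card_Ico, nsmul_eq_mul] at h2
    have h6 : ((n - N' : ℕ) : ℝ) ≤ (n : ℝ) := by exact_mod_cast Nat.sub_le n N'
    have h7 : 0 ≤ η * (L' + 2 * Real.log n) :=
      mul_nonneg hη.le (add_nonneg hL'0 (by linarith))
    nlinarith [mul_le_mul_of_nonneg_right h6 h7]
  set M := R N' + η * L' + 2 * η with hM
  have hM0 : 0 < M := by
    have := mul_nonneg hη.le hL'0
    linarith [hpos N']
  set N'' := max N' 3 with hN''
  have key : ∀ n, N'' ≤ n → R n ≤ M * n * Real.log n := by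
    intro n hn
    have hn3 : 3 ≤ n := le_trans (le_max_right _ _) hn
    have hn3' : (3:ℝ) ≤ (n:ℝ) := by exact_mod_cast hn3
    have hL1 : 1 ≤ Real.log n := by
      rw [Real.le_log_iff_exp_le (by linarith)]
      calc Real.exp 1 ≤ 2.7182818286 := Real.exp_one_lt_d9.le
        _ ≤ (n:ℝ) := by linarith
    have hn0 : (0:ℝ) < (n:ℝ) := by linarith
    have h1 := step5 n (le_trans (le_max_left _ _) hn)
    have e1 : R N' ≤ R N' * ((n:ℝ) * Real.log n) :=
      le_mul_of_one_le_right (hpos N').le (by nlinarith)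
    have e2 : (n:ℝ) * (η * (L' + 2 * Real.log n))
        ≤ (η * L' + 2 * η) * ((n:ℝ) * Real.log n) := by
      nlinarith [mul_nonneg (mul_nonneg hη.le hL'0) hn0.le]
    calc R n ≤ R N' + (n:ℝ) * (η * (L' + 2 * Real.log n)) := h1
      _ ≤ R N' * ((n:ℝ) * Real.log n) + (η * L' + 2 * η) * ((n:ℝ) * Real.log n) := by
          linarith [e1, e2]
      _ = M * n * Real.log n := by rw [hM]; ring
  -- Step 6: bound on the ratio
  have ratio : ∀ n, N'' ≤ n →
      R n / (n * Real.log n ^ a) ≤ M / Real.log n ^ (a - 1) := by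
    intro n hn
    have hn3 : 3 ≤ n := le_trans (le_max_right _ _) hn
    have hn0 : (0:ℝ) < (n:ℝ) := by exact_mod_cast (by omega : 0 < n)
    have hn3' : (3:ℝ) ≤ (n:ℝ) := by exact_mod_cast hn3
    have hL1 : 1 ≤ Real.log n := by
      rw [Real.le_log_iff_exp_le (by linarith)]
      calc Real.exp 1 ≤ 2.7182818286 := Real.exp_one_lt_d9.le
        _ ≤ (n:ℝ) := by linarith
    have hL0 : (0:ℝ) < Real.log n := lt_of_lt_of_le one_pos hL1
    have hk := key n hn
    rw [div_le_div_iff₀ (by positivity) (by positivity)]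
    have hLa : Real.log n ^ a = Real.log n ^ (a-1) * Real.log n := by
      rw [← Real.rpow_add_one hL0.ne' (a-1), sub_add_cancel]
    rw [hLa]
    have hP : (0:ℝ) ≤ Real.log n ^ (a-1) := Real.rpow_nonneg hL0.le _
    have := mul_le_mul_of_nonneg_right hk hP
    linarith
  -- Step 7: conclusion
  have hT : Tendsto (fun n : ℕ => M / Real.log n ^ (a-1)) atTop (nhds 0) := by
    apply Tendsto.div_atTop tendsto_const_nhds
    exact (tendsto_rpow_atTop (by linarith)).comp
      (Real.tendsto_log_atTop.comp tendsto_natCast_atTop_atTop)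
  have htend : Tendsto (fun n : ℕ => R n / (n * Real.log n ^ a)) atTop (nhds 0) := by
    apply tendsto_of_tendsto_of_tendsto_of_le_of_le' tendsto_const_nhds hT
    · filter_upwards [eventually_ge_atTop 1] with n hn
      have hn0 : (0:ℝ) ≤ (n:ℝ) := n.cast_nonneg
      have h2 : (0:ℝ) ≤ Real.log n ^ a := Real.rpow_nonneg (Real.log_natCast_nonneg n) _
      exact div_nonneg (hpos n).le (mul_nonneg hn0 h2)
    · filter_upwards [eventually_ge_atTop N''] with n hn
      exact ratio n hn
  exact htend.limsup_eq
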